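/- For every real m > 0, the function g(σ) = m/σ + log(1+σ) on (0, ∞) attains its global minimum at σ* = (m + √(m² + 4m))/2; that is, for all σ > 0, m/σ + log(1+σ) ≥ m/σ* + log(1+σ*), with equality if and only if σ = σ*. -/

import Mathlib

/-!
The derivative of `g(σ) = m/σ + log(1+σ)` is `(σ² - m(1+σ)) / (σ²(1+σ))`. The numerator factors
as `(σ - σ*)(σ + σ* - m)`, because `σ*` is the positive root of `σ² = mσ + m` and `m - σ*` is the
other one. As `σ* > m`, the second factor is positive for `σ > 0`, so `g` strictly decreases on
`(0, σ*]` and strictly increases on `[σ*, ∞)`.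
-/

open Real Set

theorem lt_of_deriv_neg_of_deriv_pos {f f' : ℝ → ℝ} {a c x : ℝ} (hac : a < c)
    (hf : ∀ y ∈ Ioi a, HasDerivAt f (f' y) y) (hneg : ∀ y ∈ Ioo a c, f' y < 0)
    (hpos : ∀ y ∈ Ioi c, 0 < f' y) (hx : a < x) (hxc : x ≠ c) : f c < f x := by
  have hcont : ∀ s ⊆ Ioi a, ContinuousOn f s := fun s hs y hy ↦
    (hf y (hs hy)).continuousAt.continuousWithinAt
  rcases hxc.lt_or_gt with hlt | hgt
  · have hanti : StrictAntiOn f (Ioc a c) := by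
      refine strictAntiOn_of_hasDerivWithinAt_neg (convex_Ioc a c)
        (hcont _ fun y hy ↦ hy.1) (fun y hy ↦ ?_) (by rwa [interior_Ioc])
      rw [interior_Ioc] at hy
      exact (hf y hy.1).hasDerivWithinAt
    exact hanti ⟨hx, hlt.le⟩ ⟨hac, le_rfl⟩ hlt
  · have hmono : StrictMonoOn f (Ici c) := by
      refine strictMonoOn_of_hasDerivWithinAt_pos (convex_Ici c)
        (hcont _ fun y hy ↦ hac.trans_le hy) (fun y hy ↦ ?_) (by rwa [interior_Ici])
      rw [interior_Ici] at hy
      exact (hf y (hac.trans hy)).hasDerivWithinAt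
    exact hmono (mem_Ici.2 le_rfl) hgt.le hgt

noncomputable def harmoniousLoss (m σ : ℝ) : ℝ := m / σ + log (1 + σ)

theorem hasDerivAt_harmoniousLoss (m : ℝ) {x : ℝ} (hx : 0 < x) :
    HasDerivAt (harmoniousLoss m) ((x ^ 2 - m * (1 + x)) / (x ^ 2 * (1 + x))) x := by
  have hx1 : 0 < 1 + x := by linarith
  have hinv : HasDerivAt (fun y ↦ m / y) (m * -(x ^ 2)⁻¹) x := by
    simpa only [div_eq_mul_inv] using (hasDerivAt_inv hx.ne').const_mul m
  have hlog : HasDerivAt (fun y ↦ log (1 + y)) (1 / (1 + x)) x := by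
    simpa using ((hasDerivAt_id x).const_add 1).log hx1.ne'
  refine (hinv.add hlog).congr_deriv ?_
  field_simp
  ring

noncomputable def harmoniousLossMinimizer (m : ℝ) : ℝ := (m + √(m ^ 2 + 4 * m)) / 2

theorem harmoniousLossMinimizer_sq {m : ℝ} (hm : 0 ≤ m) :
    harmoniousLossMinimizer m ^ 2 = m * harmoniousLossMinimizer m + m := by
  have hsq : √(m ^ 2 + 4 * m) ^ 2 = m ^ 2 + 4 * m := sq_sqrt (by positivity)
  unfold harmoniousLossMinimizer
  linear_combination hsq / 4

theorem lt_harmoniousLossMinimizer {m : ℝ} (hm : 0 < m) : m < harmoniousLossMinimizer m := by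
  have hlt : m < √(m ^ 2 + 4 * m) := lt_sqrt_of_sq_lt (by linarith)
  unfold harmoniousLossMinimizer
  linarith

theorem harmoniousLoss_minimizer_lt {m σ : ℝ} (hm : 0 < m) (hσ : 0 < σ)
    (hne : σ ≠ harmoniousLossMinimizer m) :
    harmoniousLoss m (harmoniousLossMinimizer m) < harmoniousLoss m σ := by
  set σs := harmoniousLossMinimizer m
  have hroot : σs ^ 2 = m * σs + m := harmoniousLossMinimizer_sq hm.le
  have hmσs : m < σs := lt_harmoniousLossMinimizer hm
  have hfactor : ∀ y, y ^ 2 - m * (1 + y) = (y - σs) * (y + σs - m) := fun y ↦ by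
    linear_combination hroot
  have hden : ∀ y : ℝ, 0 < y → 0 < y ^ 2 * (1 + y) := fun y hy ↦ by positivity
  refine lt_of_deriv_neg_of_deriv_pos (hm.trans hmσs) (fun y hy ↦ hasDerivAt_harmoniousLoss m hy)
    (fun y hy ↦ ?_) (fun y hy ↦ ?_) hσ hne
  · rw [hfactor]
    exact div_neg_of_neg_of_pos
      (mul_neg_of_neg_of_pos (by linarith [hy.2]) (by linarith [hy.1])) (hden y hy.1)
  · have hy0 : 0 < y := (hm.trans hmσs).trans hy
    rw [hfactor]
    exact div_pos (mul_pos (by linarith [mem_Ioi.1 hy]) (by linarith)) (hden y hy0)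

/-- For `m > 0`, the function `g(σ) = m/σ + log(1+σ)` on `(0, ∞)` attains its global
minimum at `σ* = (m + √(m² + 4m))/2`: for all `σ > 0`,
`m/σ + log(1+σ) ≥ m/σ* + log(1+σ*)`, with equality iff `σ = σ*`. -/
theorem stmt_5 (m : ℝ) (hm : 0 < m) (σs : ℝ)
    (hσs : σs = (m + Real.sqrt (m ^ 2 + 4 * m)) / 2) :
    ∀ σ : ℝ, 0 < σ →
      m / σs + Real.log (1 + σs) ≤ m / σ + Real.log (1 + σ) ∧
      (m / σ + Real.log (1 + σ) = m / σs + Real.log (1 + σs) ↔ σ = σs) := by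
  intro σ hσ
  obtain rfl : σs = harmoniousLossMinimizer m := hσs
  obtain rfl | hne := eq_or_ne σ (harmoniousLossMinimizer m)
  · exact ⟨le_rfl, iff_of_true rfl rfl⟩
  · have hlt := harmoniousLoss_minimizer_lt hm hσ hne
    exact ⟨hlt.le, iff_of_false hlt.ne' hne⟩
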